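/- (Theorem 2: Strong duality) Fix μ > 0 and (ς̄,σ̄) ∈ S_μ⁺, and set x̄ = G_μ(ς̄,σ̄)⁻¹(c − σ̄b). If ς̄ = ½|Bx̄|² − λ and h(x̄) = 1/μ (the stationarity conditions of P^d_μ), then x̄ is a global minimizer of P_μ over X_μ, (ς̄,σ̄) is a global maximizer of P^d_μ over S_μ⁺, and min_{x∈X_μ} P_μ(x) = P_μ(x̄) = P^d_μ(ς̄,σ̄) = max_{(ς,σ)∈S_μ⁺} P^d_μ(ς,σ). -/

import Mathlib

/-!
Every feasible pair `(x, (ς, σ))` is compared through the total complementary function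
`Ξ_μ(x, ς, σ) = q(x) + μς(½|Bx|² − λ) − (μ/2)ς² − σ(h(x) − 1/μ)`.
When `G_μ(ς, σ)` is positive definite, `x ↦ Ξ_μ(x, ς, σ)` is a strictly convex quadratic whose
minimum, attained at `G_μ(ς, σ)⁻¹(c − σb)`, is `P^d_μ(ς, σ)`; and for `σ ≥ 0` and `x ∈ X_μ`,
`Ξ_μ(x, ς, σ) ≤ P_μ(x)` since `μςt − (μ/2)ς² ≤ (μ/2)t²`. This is weak duality
`P^d_μ(ς, σ) ≤ P_μ(x)`. The stationarity conditions make both inequalities equalities at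
`(x̄, ς̄, σ̄)`, so `P_μ(x̄) = P^d_μ(ς̄, σ̄)` and weak duality turns this into the two extremality
statements.
-/

open Matrix Set Filter

noncomputable section

/-- `q(x) = ½ xᵀQx − cᵀx`. -/
def qfun {n : ℕ} (Q : Matrix (Fin n) (Fin n) ℝ) (c : Fin n → ℝ) (x : Fin n → ℝ) : ℝ :=
  (1/2) * (x ⬝ᵥ (Q *ᵥ x)) - c ⬝ᵥ x

/-- `g(x) = ½ (½|Bx|² − λ)²`. -/
def gfun {n m : ℕ} (B : Matrix (Fin m) (Fin n) ℝ) (lam : ℝ) (x : Fin n → ℝ) : ℝ :=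
  (1/2) * ((1/2) * ((B *ᵥ x) ⬝ᵥ (B *ᵥ x)) - lam)^2

/-- `h(x) = ½ xᵀHx − bᵀx`. -/
def hfun {n : ℕ} (H : Matrix (Fin n) (Fin n) ℝ) (b : Fin n → ℝ) (x : Fin n → ℝ) : ℝ :=
  (1/2) * (x ⬝ᵥ (H *ᵥ x)) - b ⬝ᵥ x

/-- `G_μ(ς,σ) = Q + μς BᵀB − σH`. -/
def Gmu {n m : ℕ} (Q : Matrix (Fin n) (Fin n) ℝ) (B : Matrix (Fin m) (Fin n) ℝ)
    (H : Matrix (Fin n) (Fin n) ℝ) (μ ς σ : ℝ) : Matrix (Fin n) (Fin n) ℝ :=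
  Q + (μ * ς) • (Bᵀ * B) - σ • H

/-- The dual feasible set `S_μ⁺`. -/
def Smu {n m : ℕ} (Q : Matrix (Fin n) (Fin n) ℝ) (B : Matrix (Fin m) (Fin n) ℝ)
    (H : Matrix (Fin n) (Fin n) ℝ) (lam μ : ℝ) : Set (ℝ × ℝ) :=
  {p : ℝ × ℝ | -lam ≤ p.1 ∧ 0 ≤ p.2 ∧ (Gmu Q B H μ p.1 p.2).PosDef}

/-- The canonical dual function `P^d_μ(ς,σ)`. -/
def Pd {n m : ℕ} (Q : Matrix (Fin n) (Fin n) ℝ) (B : Matrix (Fin m) (Fin n) ℝ)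
    (H : Matrix (Fin n) (Fin n) ℝ) (lam : ℝ) (c b : Fin n → ℝ) (μ ς σ : ℝ) : ℝ :=
  -(1/2) * ((c - σ • b) ⬝ᵥ ((Gmu Q B H μ ς σ)⁻¹ *ᵥ (c - σ • b)))
    - μ * lam * ς - (μ/2) * ς^2 + σ/μ

/-- The total complementary function `Ξ_μ(x,ς,σ)`. -/
def Xi {n m : ℕ} (Q : Matrix (Fin n) (Fin n) ℝ) (B : Matrix (Fin m) (Fin n) ℝ)
    (H : Matrix (Fin n) (Fin n) ℝ) (lam : ℝ) (c b : Fin n → ℝ)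
    (μ : ℝ) (x : Fin n → ℝ) (ς σ : ℝ) : ℝ :=
  (1/2) * (x ⬝ᵥ (Gmu Q B H μ ς σ *ᵥ x)) - (c - σ • b) ⬝ᵥ x
    - μ * lam * ς - (μ/2) * ς^2 + σ/μ

lemma Matrix.IsSymm.dotProduct_mulVec_comm {ι R : Type*} [Fintype ι] [CommSemiring R]
    {G : Matrix ι ι R} (hG : G.IsSymm) (x y : ι → R) :
    x ⬝ᵥ (G *ᵥ y) = y ⬝ᵥ (G *ᵥ x) := by
  rw [dotProduct_mulVec, ← mulVec_transpose, hG.eq, dotProduct_comm]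

lemma Matrix.IsSymm.quadratic_eq_add_sub_sq {ι R : Type*} [Fintype ι] [Field R] [CharZero R]
    {G : Matrix ι ι R} (hG : G.IsSymm) {f x₀ : ι → R} (hx₀ : G *ᵥ x₀ = f) (x : ι → R) :
    (1/2) * (x ⬝ᵥ (G *ᵥ x)) - f ⬝ᵥ x =
      ((1/2) * (x₀ ⬝ᵥ (G *ᵥ x₀)) - f ⬝ᵥ x₀) + (1/2) * ((x - x₀) ⬝ᵥ (G *ᵥ (x - x₀))) := by
  have hcross : x ⬝ᵥ (G *ᵥ x₀) = x₀ ⬝ᵥ (G *ᵥ x) := hG.dotProduct_mulVec_comm x x₀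
  have hlin : x₀ ⬝ᵥ (G *ᵥ x) = f ⬝ᵥ x := by rw [hG.dotProduct_mulVec_comm, hx₀, dotProduct_comm]
  rw [mulVec_sub, sub_dotProduct, dotProduct_sub, dotProduct_sub, hcross, hlin, hx₀, dotProduct_comm x₀ f]
  ring

lemma Matrix.quadratic_nonsing_inv_mulVec {ι R : Type*} [Fintype ι] [DecidableEq ι] [Field R] [CharZero R]
    {G : Matrix ι ι R} (hG : IsUnit G.det) (f : ι → R) :
    (1/2) * ((G⁻¹ *ᵥ f) ⬝ᵥ (G *ᵥ (G⁻¹ *ᵥ f))) - f ⬝ᵥ (G⁻¹ *ᵥ f) =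
      -(1/2) * (f ⬝ᵥ (G⁻¹ *ᵥ f)) := by
  rw [mulVec_mulVec, mul_nonsing_inv _ hG, one_mulVec, dotProduct_comm]
  ring

lemma Matrix.PosDef.neg_half_dotProduct_inv_le {ι : Type*} [Fintype ι] [DecidableEq ι]
    {G : Matrix ι ι ℝ} (hG : G.PosDef) (f x : ι → ℝ) :
    -(1/2) * (f ⬝ᵥ (G⁻¹ *ᵥ f)) ≤ (1/2) * (x ⬝ᵥ (G *ᵥ x)) - f ⬝ᵥ x := by
  have hdet : IsUnit G.det := (isUnit_iff_isUnit_det G).mp hG.isUnit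
  have hsolve : G *ᵥ (G⁻¹ *ᵥ f) = f := by rw [mulVec_mulVec, mul_nonsing_inv _ hdet, one_mulVec]
  have hsymm : G.IsSymm := isHermitian_iff_isSymm.mp hG.isHermitian
  have hsq := hG.posSemidef.dotProduct_mulVec_nonneg (x - G⁻¹ *ᵥ f)
  rw [star_trivial] at hsq
  rw [hsymm.quadratic_eq_add_sub_sq hsolve x, quadratic_nonsing_inv_mulVec hdet f]
  linarith

section Duality

variable {n m : ℕ} {Q : Matrix (Fin n) (Fin n) ℝ} {B : Matrix (Fin m) (Fin n) ℝ}
  {H : Matrix (Fin n) (Fin n) ℝ} {lam : ℝ} {c b : Fin n → ℝ} {μ : ℝ}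

lemma Xi_eq (x : Fin n → ℝ) (ς σ : ℝ) :
    Xi Q B H lam c b μ x ς σ =
      qfun Q c x + μ * ς * ((1/2) * ((B *ᵥ x) ⬝ᵥ (B *ᵥ x)) - lam)
        - (μ/2) * ς^2 - σ * (hfun H b x - 1/μ) := by
  have hBB : x ⬝ᵥ ((Bᵀ * B) *ᵥ x) = (B *ᵥ x) ⬝ᵥ (B *ᵥ x) := by
    rw [← mulVec_mulVec, dotProduct_mulVec, vecMul_transpose]
  simp only [Xi, qfun, hfun, Gmu, sub_mulVec, add_mulVec, smul_mulVec, dotProduct_sub,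
    dotProduct_add, dotProduct_smul, sub_dotProduct, smul_dotProduct, hBB, smul_eq_mul]
  ring

lemma Pd_le_Xi {ς σ : ℝ} (hG : (Gmu Q B H μ ς σ).PosDef) (x : Fin n → ℝ) :
    Pd Q B H lam c b μ ς σ ≤ Xi Q B H lam c b μ x ς σ := by
  have := hG.neg_half_dotProduct_inv_le (c - σ • b) x
  simp only [Pd, Xi]
  linarith

lemma Xi_nonsing_inv_mulVec_eq_Pd {ς σ : ℝ} (hG : IsUnit (Gmu Q B H μ ς σ).det) :
    Xi Q B H lam c b μ ((Gmu Q B H μ ς σ)⁻¹ *ᵥ (c - σ • b)) ς σ = Pd Q B H lam c b μ ς σ := by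
  have := quadratic_nonsing_inv_mulVec hG (c - σ • b)
  simp only [Pd, Xi]
  linarith

lemma Xi_le_primal (hμ : 0 ≤ μ) {x : Fin n → ℝ} (hx : 1/μ ≤ hfun H b x)
    (ς : ℝ) {σ : ℝ} (hσ : 0 ≤ σ) :
    Xi Q B H lam c b μ x ς σ ≤ qfun Q c x + μ * gfun B lam x := by
  have hcompl : 0 ≤ σ * (hfun H b x - 1/μ) := mul_nonneg hσ (sub_nonneg.mpr hx)
  rw [Xi_eq, gfun]
  set t := (1/2) * ((B *ᵥ x) ⬝ᵥ (B *ᵥ x)) - lam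
  have hsq : 0 ≤ (μ/2) * (ς - t)^2 := by positivity
  linear_combination hsq + hcompl

lemma primal_eq_Xi_of_stationary {x : Fin n → ℝ} {ς : ℝ}
    (hς : ς = (1/2) * ((B *ᵥ x) ⬝ᵥ (B *ᵥ x)) - lam) (hx : hfun H b x = 1/μ) (σ : ℝ) :
    qfun Q c x + μ * gfun B lam x = Xi Q B H lam c b μ x ς σ := by
  rw [Xi_eq, hx, gfun, ← hς]
  ring

lemma Pd_le_primal (hμ : 0 ≤ μ) {p : ℝ × ℝ} (hp : p ∈ Smu Q B H lam μ)
    {x : Fin n → ℝ} (hx : 1/μ ≤ hfun H b x) :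
    Pd Q B H lam c b μ p.1 p.2 ≤ qfun Q c x + μ * gfun B lam x :=
  (Pd_le_Xi hp.2.2 x).trans (Xi_le_primal hμ hx p.1 hp.2.1)

end Duality

theorem stmt_15_general {n m : ℕ}
    (Q : Matrix (Fin n) (Fin n) ℝ)
    (B : Matrix (Fin m) (Fin n) ℝ)
    (H : Matrix (Fin n) (Fin n) ℝ)
    (lam : ℝ) (c b : Fin n → ℝ)
    (μ : ℝ) (hμ : 0 < μ)
    (ςb σb : ℝ) (hmem : (ςb, σb) ∈ Smu Q B H lam μ)
    (xbar : Fin n → ℝ) (hxbar : xbar = (Gmu Q B H μ ςb σb)⁻¹ *ᵥ (c - σb • b))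
    (h1 : ςb = (1/2) * ((B *ᵥ xbar) ⬝ᵥ (B *ᵥ xbar)) - lam)
    (h2 : hfun H b xbar = 1/μ) :
    (∀ x : Fin n → ℝ, 1/μ ≤ hfun H b x →
      qfun Q c xbar + μ * gfun B lam xbar ≤ qfun Q c x + μ * gfun B lam x) ∧
    (∀ p ∈ Smu Q B H lam μ, Pd Q B H lam c b μ p.1 p.2 ≤ Pd Q B H lam c b μ ςb σb) ∧
    qfun Q c xbar + μ * gfun B lam xbar = Pd Q B H lam c b μ ςb σb := by
  have hdet : IsUnit (Gmu Q B H μ ςb σb).det := (isUnit_iff_isUnit_det _).mp hmem.2.2.isUnit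
  have hvalue : qfun Q c xbar + μ * gfun B lam xbar = Pd Q B H lam c b μ ςb σb := by
    rw [primal_eq_Xi_of_stationary h1 h2 σb, hxbar]
    exact Xi_nonsing_inv_mulVec_eq_Pd hdet
  exact ⟨fun x hx => hvalue.trans_le (Pd_le_primal hμ.le hmem hx),
    fun p hp => (Pd_le_primal hμ.le hp h2.ge).trans_eq hvalue, hvalue⟩

/-- Theorem 2: strong duality: if `(ς̄,σ̄) ∈ S_μ⁺` satisfies the
stationarity conditions `ς̄ = ½|Bx̄|² − λ` and `h(x̄) = 1/μ` with
`x̄ = G_μ(ς̄,σ̄)⁻¹(c − σ̄b)`, then `x̄` globally minimizes `P_μ` over `X_μ`,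
`(ς̄,σ̄)` globally maximizes `P^d_μ` over `S_μ⁺`, and the optimal values agree. -/
theorem stmt_15 {n m : ℕ} (hn : 0 < n) (hm : 0 < m)
    (Q : Matrix (Fin n) (Fin n) ℝ) (hQsymm : Q.IsSymm)
    (B : Matrix (Fin m) (Fin n) ℝ)
    (H : Matrix (Fin n) (Fin n) ℝ) (hHsymm : H.IsSymm) (hHneg : (-H).PosDef)
    (lam : ℝ) (hlam : 0 ≤ lam) (c b : Fin n → ℝ)
    (μ : ℝ) (hμ : 0 < μ)
    (ςb σb : ℝ) (hmem : (ςb, σb) ∈ Smu Q B H lam μ)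
    (xbar : Fin n → ℝ) (hxbar : xbar = (Gmu Q B H μ ςb σb)⁻¹ *ᵥ (c - σb • b))
    (h1 : ςb = (1/2) * ((B *ᵥ xbar) ⬝ᵥ (B *ᵥ xbar)) - lam)
    (h2 : hfun H b xbar = 1/μ) :
    (∀ x : Fin n → ℝ, 1/μ ≤ hfun H b x →
      qfun Q c xbar + μ * gfun B lam xbar ≤ qfun Q c x + μ * gfun B lam x) ∧
    (∀ p ∈ Smu Q B H lam μ, Pd Q B H lam c b μ p.1 p.2 ≤ Pd Q B H lam c b μ ςb σb) ∧
    qfun Q c xbar + μ * gfun B lam xbar = Pd Q B H lam c b μ ςb σb :=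
  stmt_15_general Q B H lam c b μ hμ ςb σb hmem xbar hxbar h1 h2
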